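/- For a delta-matroid D = (E, F), the set systems D_max = (E, F_max) and D_min = (E, F_min), where F_max and F_min are the collections of maximum and minimum cardinality feasible sets respectively, are matroids. -/

import Mathlib

open Finset

variable {α : Type*}

/-- The twist of a family of feasible sets by a set `A`:
`{A Δ X : X ∈ F}`. -/
def twistF [DecidableEq α] (A : Finset α) (F : Finset (Finset α)) : Finset (Finset α) :=
  F.image (fun X => symmDiff A X)

/-- `D = (E, F)` is a delta-matroid: `F` is nonempty, consists of subsets of `E`,
and satisfies the symmetric exchange axiom. -/
def IsDeltaMatroid [DecidableEq α] (E : Finset α) (F : Finset (Finset α)) : Prop :=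
  F.Nonempty ∧ (∀ X ∈ F, X ⊆ E) ∧
    ∀ X ∈ F, ∀ Y ∈ F, ∀ u ∈ symmDiff X Y,
      ∃ v ∈ symmDiff X Y, symmDiff X {u, v} ∈ F

/-- The width of a set system: max feasible size minus min feasible size. -/
def widthF (F : Finset (Finset α)) : ℕ :=
  (F.image Finset.card).max.getD 0 - (F.image Finset.card).min.getD 0

/-- The twist polynomial `∑_{A ⊆ E} z^{w(D*A)}`, as a polynomial over ℤ. -/
noncomputable def twistPoly [DecidableEq α] (E : Finset α) (F : Finset (Finset α)) :
    Polynomial ℤ :=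
  ∑ A ∈ E.powerset, Polynomial.X ^ widthF (twistF A F)

/-- The maximum-cardinality feasible sets of F. -/
def Fmax [DecidableEq α] (F : Finset (Finset α)) : Finset (Finset α) :=
  F.filter (fun X => ∀ Y ∈ F, Y.card ≤ X.card)

/-- The minimum-cardinality feasible sets of F. -/
def Fmin [DecidableEq α] (F : Finset (Finset α)) : Finset (Finset α) :=
  F.filter (fun X => ∀ Y ∈ F, X.card ≤ Y.card)

/-!
For a family of equicardinal sets, symmetric exchange amounts to two basis exchange properties:
for `u ∈ X \ Y` some `X - u + v` with `v ∈ Y \ X` is feasible, and for `u ∈ Y \ X` some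
`X + u - v` with `v ∈ X \ Y` is. In `F_min` the first one is immediate: the partner `v` that
symmetric exchange provides for `u ∈ X \ Y` cannot lie in `X`, as `X Δ {u, v}` would then be
smaller than `X`. So `F_min` is the set of bases of a matroid, and the second property is basis
exchange in the dual matroid. Twisting by `E` preserves delta-matroids and turns maximum feasible
sets into minimum ones, which reduces `F_max` to `F_min`.
-/

theorem Matroid.IsBase.rev_exchange {M : Matroid α} {B₁ B₂ : Set α} {e : α}
    (hB₁ : M.IsBase B₁) (hB₂ : M.IsBase B₂) (he : e ∈ B₂ \ B₁) :
    ∃ f ∈ B₁ \ B₂, M.IsBase (insert e (B₁ \ {f})) := by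
  have heE : e ∈ M.E := hB₂.subset_ground he.1
  obtain ⟨f, ⟨⟨hfE, hfB₂⟩, hfB₁⟩, hdual⟩ := hB₁.compl_isBase_dual.exchange
    hB₂.compl_isBase_dual ⟨⟨heE, he.2⟩, fun h => h.2 he.1⟩
  have hfB₁ : f ∈ B₁ := by_contra fun h => hfB₁ ⟨hfE, h⟩
  refine ⟨f, ⟨hfB₁, hfB₂⟩, ?_⟩
  convert hdual.compl_isBase_of_dual using 1
  have := hB₁.subset_ground
  ext x
  simp only [Set.mem_insert_iff, Set.mem_sdiff, Set.mem_singleton_iff]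
  grind

theorem Finset.exists_insert_erase_mem_of_exchange [DecidableEq α] {B : Finset (Finset α)}
    (hB : ∀ X ∈ B, ∀ Y ∈ B, ∀ u ∈ X \ Y, ∃ v ∈ Y \ X, insert v (X.erase u) ∈ B)
    {X Y : Finset α} (hX : X ∈ B) (hY : Y ∈ B) {u : α} (hu : u ∈ Y \ X) :
    ∃ v ∈ X \ Y, insert u (X.erase v) ∈ B := by
  let M := Matroid.ofExistsFiniteIsBase Set.univ (fun S => ∃ Z ∈ B, (Z : Set α) = S)
    ⟨X, ⟨X, hX, rfl⟩, X.finite_toSet⟩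
    (by
      rintro _ _ ⟨Z, hZ, rfl⟩ ⟨W, hW, rfl⟩ a ha
      obtain ⟨b, hb, hmem⟩ := hB Z hZ W hW a (by simpa using ha)
      exact ⟨b, by simpa using hb, _, hmem, by simp⟩)
    (fun _ _ => Set.subset_univ _)
  obtain ⟨v, hv, Z, hZ, hZeq⟩ :=
    Matroid.IsBase.rev_exchange (M := M) ⟨X, hX, rfl⟩ ⟨Y, hY, rfl⟩ (e := u) (by simpa using hu)
  refine ⟨v, by simpa using hv, ?_⟩
  rwa [show Z = insert u (X.erase v) by exact_mod_cast hZeq] at hZ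

section DeltaMatroid

variable [DecidableEq α] {E : Finset α} {F : Finset (Finset α)}

theorem symmDiff_pair_eq_insert_erase {X : Finset α} {u v : α} (hu : u ∈ X) (hv : v ∉ X) :
    symmDiff X {u, v} = insert v (X.erase u) := by
  ext x
  simp only [mem_symmDiff, mem_insert, mem_singleton, mem_erase]
  grind

theorem card_eq_of_mem_Fmin {X Y : Finset α} (hX : X ∈ Fmin F) (hY : Y ∈ Fmin F) :
    X.card = Y.card :=
  le_antisymm ((mem_filter.1 hX).2 Y (mem_filter.1 hY).1)
    ((mem_filter.1 hY).2 X (mem_filter.1 hX).1)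

theorem card_eq_of_mem_Fmax {X Y : Finset α} (hX : X ∈ Fmax F) (hY : Y ∈ Fmax F) :
    X.card = Y.card :=
  le_antisymm ((mem_filter.1 hY).2 X (mem_filter.1 hX).1)
    ((mem_filter.1 hX).2 Y (mem_filter.1 hY).1)

theorem IsDeltaMatroid.exists_insert_erase_mem_Fmin (hD : IsDeltaMatroid E F) {X Y : Finset α}
    (hX : X ∈ Fmin F) (hY : Y ∈ Fmin F) {u : α} (hu : u ∈ X \ Y) :
    ∃ v ∈ Y \ X, insert v (X.erase u) ∈ Fmin F := by
  simp only [Fmin, mem_filter] at hX hY ⊢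
  obtain ⟨huX, huY⟩ := mem_sdiff.1 hu
  obtain ⟨v, hv, hmem⟩ := hD.2.2 X hX.1 Y hY.1 u (mem_symmDiff.2 (Or.inl ⟨huX, huY⟩))
  have hvX : v ∉ X := by
    intro hvX
    have hpair : {u, v} ⊆ X := insert_subset huX (singleton_subset_iff.2 hvX)
    have hlt : (symmDiff X {u, v}).card < X.card := by
      rw [symmDiff_of_ge hpair]
      exact card_lt_card (sdiff_ssubset hpair (insert_nonempty _ _))
    exact (hX.2 _ hmem).not_gt hlt
  have hvY : v ∈ Y := by simpa [mem_symmDiff, hvX] using hv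
  rw [symmDiff_pair_eq_insert_erase huX hvX] at hmem
  refine ⟨v, mem_sdiff.2 ⟨hvY, hvX⟩, hmem, fun W hW => ?_⟩
  rw [card_insert_of_notMem (fun h => hvX (mem_of_mem_erase h)), card_erase_add_one huX]
  exact hX.2 W hW

theorem isDeltaMatroid_Fmin (hD : IsDeltaMatroid E F) : IsDeltaMatroid E (Fmin F) := by
  obtain ⟨X₀, hX₀, hmin⟩ := F.exists_min_image card hD.1
  refine ⟨⟨X₀, mem_filter.2 ⟨hX₀, hmin⟩⟩, fun X hX => hD.2.1 X (mem_filter.1 hX).1, ?_⟩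
  intro X hX Y hY u hu
  rcases mem_symmDiff.1 hu with ⟨huX, huY⟩ | ⟨huY, huX⟩
  · obtain ⟨v, hv, hmem⟩ := hD.exists_insert_erase_mem_Fmin hX hY (mem_sdiff.2 ⟨huX, huY⟩)
    obtain ⟨hvY, hvX⟩ := mem_sdiff.1 hv
    refine ⟨v, mem_symmDiff.2 (Or.inr ⟨hvY, hvX⟩), ?_⟩
    rwa [symmDiff_pair_eq_insert_erase huX hvX]
  · obtain ⟨v, hv, hmem⟩ := exists_insert_erase_mem_of_exchange
      (fun _ hX _ hY _ hu => hD.exists_insert_erase_mem_Fmin hX hY hu) hX hY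
      (mem_sdiff.2 ⟨huY, huX⟩)
    obtain ⟨hvX, hvY⟩ := mem_sdiff.1 hv
    refine ⟨v, mem_symmDiff.2 (Or.inl ⟨hvX, hvY⟩), ?_⟩
    rwa [pair_comm, symmDiff_pair_eq_insert_erase hvX huX]

theorem mem_twistF {A Z : Finset α} : Z ∈ twistF A F ↔ symmDiff A Z ∈ F := by
  refine ⟨?_, fun h => mem_image.2 ⟨_, h, symmDiff_symmDiff_cancel_left A Z⟩⟩
  intro h
  obtain ⟨X, hX, rfl⟩ := mem_image.1 h
  rwa [symmDiff_symmDiff_cancel_left]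

theorem isDeltaMatroid_twistF (hD : IsDeltaMatroid E F) {A : Finset α} (hA : A ⊆ E) :
    IsDeltaMatroid E (twistF A F) := by
  refine ⟨hD.1.image _, fun X hX => ?_, fun X hX Y hY u hu => ?_⟩
  · obtain ⟨Z, hZ, rfl⟩ := mem_image.1 hX
    exact symmDiff_le (le_sup_of_le_right hA) (le_sup_of_le_right (hD.2.1 Z hZ))
  · have hXY : symmDiff (symmDiff A X) (symmDiff A Y) = symmDiff X Y := by
      rw [symmDiff_symmDiff_symmDiff_comm, symmDiff_self, bot_symmDiff]
    obtain ⟨v, hv, hmem⟩ := hD.2.2 _ (mem_twistF.1 hX) _ (mem_twistF.1 hY) u (hXY ▸ hu)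
    exact ⟨v, hXY.symm ▸ hv, mem_twistF.2 (by rwa [← symmDiff_assoc])⟩

theorem Fmax_eq_twistF_Fmin_twistF (hF : ∀ X ∈ F, X ⊆ E) :
    Fmax F = twistF E (Fmin (twistF E F)) := by
  have hcard : ∀ X ∈ F, (symmDiff E X).card = E.card - X.card := fun X hX => by
    rw [symmDiff_of_ge (hF X hX), card_sdiff_of_subset (hF X hX)]
  ext Z
  rw [mem_twistF, Fmin, Fmax, mem_filter, mem_filter, mem_twistF, symmDiff_symmDiff_cancel_left,
    twistF, forall_mem_image]
  refine and_congr_right fun hZ => forall₂_congr fun Y hY => ?_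
  rw [hcard Z hZ, hcard Y hY]
  have := card_le_card (hF Z hZ)
  have := card_le_card (hF Y hY)
  omega

end DeltaMatroid

/-- D_max and D_min are matroids (delta-matroids with equicardinal feasible sets). -/
theorem max_min_matroid [DecidableEq α] (E : Finset α) (F : Finset (Finset α))
    (hD : IsDeltaMatroid E F) :
    (IsDeltaMatroid E (Fmax F) ∧ ∀ X ∈ Fmax F, ∀ Y ∈ Fmax F, X.card = Y.card) ∧
      (IsDeltaMatroid E (Fmin F) ∧ ∀ X ∈ Fmin F, ∀ Y ∈ Fmin F, X.card = Y.card) := by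
  refine ⟨⟨?_, fun _ hX _ hY => card_eq_of_mem_Fmax hX hY⟩,
    ⟨isDeltaMatroid_Fmin hD, fun _ hX _ hY => card_eq_of_mem_Fmin hX hY⟩⟩
  rw [Fmax_eq_twistF_Fmin_twistF hD.2.1]
  exact isDeltaMatroid_twistF
    (isDeltaMatroid_Fmin (isDeltaMatroid_twistF hD subset_rfl)) subset_rfl
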